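/- An element g ∈ SL(2,ℂ) lies in A·SU(2) (with A the positive diagonal subgroup) if and only if for every X in the Lie algebra su(2), the derivative at t = 0 of the Iwasawa A-projection t ↦ A(exp(tX)·g) vanishes. -/

import Mathlib

noncomputable section

/-- `a(t) = diag(e^{t/2}, e^{-t/2})`. -/
def Ac (t : ℝ) : Matrix (Fin 2) (Fin 2) ℂ :=
  !![(Real.exp (t/2) : ℂ), 0; 0, (Real.exp (-(t/2)) : ℂ)]

/-- SU(2) as a set of matrices. -/
def SU2 : Set (Matrix (Fin 2) (Fin 2) ℂ) := {k | k * k.conjTranspose = 1 ∧ k.det = 1}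

/-- The Iwasawa A-projection of `g ∈ SL(2,ℂ)` (identified with a real number):
`A(g) = −log(|c|² + |d|²)` where `(c, d)` is the bottom row of `g`. -/
def IwaA (g : Matrix (Fin 2) (Fin 2) ℂ) : ℝ :=
  -Real.log (Complex.normSq (g 1 0) + Complex.normSq (g 1 1))

/-!
Put `P = g * gᴴ`. Since `a(t)` is Hermitian, `g = a(t) k` with `k ∈ SU(2)` exactly when
`P = a(2t)`; for `det g = 1` such a `t` exists exactly when `P` is diagonal, because then
`det P = P₀₀ P₁₁ = 1`. On the other side `A(h) = -log (h hᴴ)₁₁`, whose derivative along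
`exp(tX) g` is `-2 Re (X P)₁₁ / P₁₁`. For skew-Hermitian `X` the term `X₁₁ P₁₁` is imaginary,
so the derivative is `-2 Re (X₁₀ P₀₁) / P₁₁`, and `X₁₀` ranges over all of `ℂ` on `su(2)`.
-/

open Matrix Complex

lemma Ac_add (s t : ℝ) : Ac (s + t) = Ac s * Ac t := by
  ext i j
  fin_cases i <;> fin_cases j <;>
    simp [Ac, -ofReal_exp, ← ofReal_mul, ← Real.exp_add, add_div, add_comm]

lemma Ac_zero : Ac 0 = 1 := by
  ext i j
  fin_cases i <;> fin_cases j <;> simp [Ac]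

lemma conjTranspose_Ac (t : ℝ) : (Ac t)ᴴ = Ac t := by
  ext i j
  fin_cases i <;> fin_cases j <;> simp [Ac, -ofReal_exp]

lemma det_Ac (t : ℝ) : (Ac t).det = 1 := by
  simp [Ac, det_fin_two_of, -ofReal_exp, ← ofReal_mul, ← Real.exp_add]

lemma mul_conjTranspose_self_apply_self {n : Type*} [Fintype n] (A : Matrix n n ℂ) (i : n) :
    (A * Aᴴ) i i = ((∑ j, normSq (A i j) : ℝ) : ℂ) := by
  simp [mul_apply, mul_conj]

lemma exists_mem_SU2_eq_Ac_mul_iff {g : Matrix (Fin 2) (Fin 2) ℂ} (hg : g.det = 1) (t : ℝ) :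
    (∃ k ∈ SU2, g = Ac t * k) ↔ g * gᴴ = Ac (t + t) := by
  constructor
  · rintro ⟨k, ⟨hk, -⟩, rfl⟩
    rw [conjTranspose_mul, conjTranspose_Ac, mul_assoc, ← mul_assoc k, hk, Matrix.one_mul,
      ← Ac_add]
  · intro h
    refine ⟨Ac (-t) * g, ⟨?_, by rw [det_mul, det_Ac, hg, one_mul]⟩, ?_⟩
    · calc Ac (-t) * g * (Ac (-t) * g)ᴴ = Ac (-t) * (g * gᴴ) * Ac (-t) := by
            rw [conjTranspose_mul, conjTranspose_Ac]; simp only [Matrix.mul_assoc]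
        _ = 1 := by rw [h, ← Ac_add, ← Ac_add, show -t + (t + t) + -t = 0 by ring, Ac_zero]
    · rw [← Matrix.mul_assoc, ← Ac_add, add_neg_cancel, Ac_zero, Matrix.one_mul]

lemma exists_mul_conjTranspose_eq_Ac_iff {g : Matrix (Fin 2) (Fin 2) ℂ} (hg : g.det = 1) :
    (∃ t, g * gᴴ = Ac (t + t)) ↔ (g * gᴴ) 0 1 = 0 := by
  constructor
  · rintro ⟨t, h⟩
    simp [h, Ac]
  · intro h01
    have h10 : (g * gᴴ) 1 0 = 0 := by
      rw [← (isHermitian_mul_conjTranspose_self g).apply, h01, star_zero]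
    set p := ∑ j, normSq (g 0 j)
    set q := ∑ j, normSq (g 1 j)
    have hP0 : (g * gᴴ) 0 0 = p := mul_conjTranspose_self_apply_self g 0
    have hP1 : (g * gᴴ) 1 1 = q := mul_conjTranspose_self_apply_self g 1
    have hpq : p * q = 1 := by
      have hdet : (g * gᴴ).det = 1 := by rw [det_mul, det_conjTranspose, hg, star_one, one_mul]
      rw [det_fin_two, hP0, hP1, h01, h10, mul_zero, sub_zero] at hdet
      exact_mod_cast hdet
    have hp : 0 < p := by
      have : 0 ≤ p := Finset.sum_nonneg fun j _ => normSq_nonneg _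
      exact lt_of_le_of_ne this (by rintro h; simp [← h] at hpq)
    refine ⟨Real.log p, ?_⟩
    ext i j
    fin_cases i <;> fin_cases j
    · simp [Ac, -ofReal_exp, hP0, Real.exp_log hp]
    · simpa [Ac] using h01
    · simpa [Ac] using h10
    · simp [Ac, -ofReal_exp, hP1, Real.exp_neg, Real.exp_log hp, eq_inv_of_mul_eq_one_right hpq]

section ExpDeriv

-- Any Banach algebra norm will do: `NormedSpace.exp` does not depend on it.
attribute [local instance] Matrix.linftyOpNormedRing Matrix.linftyOpNormedAlgebra

lemma hasDerivAt_exp_smul_mul_apply {n : Type*} [Fintype n] [DecidableEq n]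
    (X g : Matrix n n ℂ) (i j : n) :
    HasDerivAt (fun t : ℝ => (NormedSpace.exp ((t : ℂ) • X) * g) i j) ((X * g) i j) 0 := by
  have hexp := hasDerivAt_exp_smul_const (𝕂 := ℂ) X 0
  rw [zero_smul, NormedSpace.exp_zero, Matrix.one_mul] at hexp
  have hentry := (entryLinearMap ℂ ℂ i j).toContinuousLinearMap.hasFDerivAt.comp_hasDerivAt _
    (hexp.mul_const g)
  exact HasDerivAt.comp_ofReal (e := fun u : ℂ => (NormedSpace.exp (u • X) * g) i j) hentry

end ExpDeriv

lemma IwaA_eq_neg_log_norm_sq (g : Matrix (Fin 2) (Fin 2) ℂ) :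
    IwaA g = -Real.log (‖g 1 0‖ ^ 2 + ‖g 1 1‖ ^ 2) := by
  simp only [IwaA, normSq_eq_norm_sq]

lemma hasDerivAt_IwaA_exp_smul_mul (X g : Matrix (Fin 2) (Fin 2) ℂ)
    (hq : normSq (g 1 0) + normSq (g 1 1) ≠ 0) :
    HasDerivAt (fun t : ℝ => IwaA (NormedSpace.exp ((t : ℂ) • X) * g))
      (-(2 * ((X * (g * gᴴ)) 1 1).re / (normSq (g 1 0) + normSq (g 1 1)))) 0 := by
  have hsum := ((hasDerivAt_exp_smul_mul_apply X g 1 0).norm_sq).add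
    (hasDerivAt_exp_smul_mul_apply X g 1 1).norm_sq
  simp only [ofReal_zero, zero_smul, NormedSpace.exp_zero, Matrix.one_mul] at hsum
  have hlog := (hsum.log (by simpa [normSq_eq_norm_sq] using hq)).neg
  simp only [IwaA_eq_neg_log_norm_sq]
  refine hlog.congr_deriv ?_
  simp only [Complex.inner, ← Matrix.mul_assoc, mul_apply (M := X * g), Fin.sum_univ_two,
    conjTranspose_apply, RCLike.star_def, add_re, ofReal_zero, zero_smul, NormedSpace.exp_zero,
    Matrix.one_mul, Pi.add_apply, normSq_eq_norm_sq]
  ring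

lemma normSq_add_normSq_pos_of_det_ne_zero {g : Matrix (Fin 2) (Fin 2) ℂ} (hg : g.det ≠ 0) :
    0 < normSq (g 1 0) + normSq (g 1 1) := by
  by_contra! h
  have hc := normSq_nonneg (g 1 0)
  have hd := normSq_nonneg (g 1 1)
  have h0 : g 1 0 = 0 := normSq_eq_zero.1 (by linarith)
  have h1 : g 1 1 = 0 := normSq_eq_zero.1 (by linarith)
  exact hg (by simp [det_fin_two, h0, h1])

lemma re_mul_apply_one_one_of_conjTranspose_eq_neg {X P : Matrix (Fin 2) (Fin 2) ℂ}
    (hX : Xᴴ = -X) (hP : P.IsHermitian) : ((X * P) 1 1).re = (X 1 0 * P 0 1).re := by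
  have hX11 : (X 1 1).re = 0 := by
    have := congrArg re (congrFun₂ hX 1 1)
    simp only [conjTranspose_apply, RCLike.star_def, conj_re, Matrix.neg_apply, neg_re] at this
    linarith
  have hP11 : (P 1 1).im = 0 := by
    have := congrArg im (hP.apply 1 1)
    simp only [RCLike.star_def, conj_im] at this
    linarith
  simp [mul_apply, Fin.sum_univ_two, hX11, hP11]

lemma forall_re_mul_apply_one_zero_eq_zero_iff (w : ℂ) :
    (∀ X : Matrix (Fin 2) (Fin 2) ℂ, Xᴴ = -X → X.trace = 0 → (X 1 0 * w).re = 0) ↔ w = 0 := by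
  refine ⟨fun h => ?_, by rintro rfl X - -; simp⟩
  have hre := h !![0, -1; 1, 0] (by ext i j; fin_cases i <;> fin_cases j <;> simp)
    (by simp [trace_fin_two])
  have him := h !![0, I; I, 0] (by ext i j; fin_cases i <;> fin_cases j <;> simp)
    (by simp [trace_fin_two])
  exact Complex.ext (by simpa using hre) (by simpa using him)

/-- `g ∈ A·SU(2)` iff for every `X ∈ su(2)` the derivative at `t = 0` of
`t ↦ A(exp(tX)·g)` vanishes. -/
theorem stmt_9 (g : Matrix (Fin 2) (Fin 2) ℂ) (hg : g.det = 1) :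
    (∃ t : ℝ, ∃ k ∈ SU2, g = Ac t * k) ↔
      ∀ X : Matrix (Fin 2) (Fin 2) ℂ, X.conjTranspose = -X → X.trace = 0 →
        deriv (fun t : ℝ => IwaA (NormedSpace.exp ((t : ℂ) • X) * g)) 0 = 0 := by
  have hq := normSq_add_normSq_pos_of_det_ne_zero (hg ▸ one_ne_zero)
  rw [exists_congr fun t => exists_mem_SU2_eq_Ac_mul_iff hg t,
    exists_mul_conjTranspose_eq_Ac_iff hg, ← forall_re_mul_apply_one_zero_eq_zero_iff]
  refine forall_congr' fun X => forall_congr' fun hX => forall_congr' fun _ => ?_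
  rw [(hasDerivAt_IwaA_exp_smul_mul X g hq.ne').deriv,
    re_mul_apply_one_one_of_conjTranspose_eq_neg hX (isHermitian_mul_conjTranspose_self g)]
  simp [hq.ne']
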